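/- For every integer n ≥ 1, Δ^{odd}_{3,2}([0, 2^{2n})) = 0, i.e. among the odd integers m < 2^{2n} with m ≡ 2 (mod 3), the number of odious integers equals the number of evil integers. -/
import Mathlib


/-- `s2 m` is the number of 1's in the binary expansion of `m` (binary digit sum). -/
def s2 (m : ℕ) : ℕ := (Nat.digits 2 m).sum

/-- A natural number is *odious* if the number of 1's in its binary expansion is odd. -/
def Odious (m : ℕ) : Prop := Odd (s2 m)

/-- A natural number is *evil* if the number of 1's in its binary expansion is even. -/
def Evil (m : ℕ) : Prop := Even (s2 m)

instance : DecidablePred Odious := fun m => inferInstanceAs (Decidable (Odd (s2 m)))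
instance : DecidablePred Evil := fun m => inferInstanceAs (Decidable (Even (s2 m)))

/-- `muOdious n` = μ⁰(n): the number of odd odious integers in `[0, n)`. -/
def muOdious (n : ℕ) : ℕ := ((Finset.range n).filter (fun m => Odd m ∧ Odious m)).card

/-- `muEvil n` = μᵉ(n): the number of odd evil integers in `[0, n)`. -/
def muEvil (n : ℕ) : ℕ := ((Finset.range n).filter (fun m => Odd m ∧ Evil m)).card

/-- `deltaOdd3 i n` = Δ^{odd}_{3,i}(n): the number of odd odious integers `m ∈ [0, n)` with
`m ≡ i (mod 3)` minus the number of odd evil integers `m ∈ [0, n)` with `m ≡ i (mod 3)`. -/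
def deltaOdd3 (i n : ℕ) : ℤ :=
  (((Finset.range n).filter (fun m => Odd m ∧ m % 3 = i ∧ Odious m)).card : ℤ) -
  (((Finset.range n).filter (fun m => Odd m ∧ m % 3 = i ∧ Evil m)).card : ℤ)

/-- `delta3 N` = Δ₃([0, N)): the number of evil multiples of 3 in `[0, N)` minus the number of
odious multiples of 3 in `[0, N)`. -/
def delta3 (N : ℕ) : ℤ :=
  (((Finset.range N).filter (fun m => 3 ∣ m ∧ Evil m)).card : ℤ) -
  (((Finset.range N).filter (fun m => 3 ∣ m ∧ Odious m)).card : ℤ)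

/-- `deltaOdd3All n` = Δ^{odd}₃([0, n)): the number of odd evil multiples of 3 in `[0, n)`
minus the number of odd odious multiples of 3 in `[0, n)`. -/
def deltaOdd3All (n : ℕ) : ℤ :=
  (((Finset.range n).filter (fun m => Odd m ∧ 3 ∣ m ∧ Evil m)).card : ℤ) -
  (((Finset.range n).filter (fun m => Odd m ∧ 3 ∣ m ∧ Odious m)).card : ℤ)


/-! ### Auxiliary lemmas -/

lemma s2_two_mul (q : ℕ) : s2 (2 * q) = s2 q := by
  rcases Nat.eq_zero_or_pos q with h | h
  · simp [h, s2]
  · unfold s2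
    rw [Nat.digits_def' (by norm_num : 1 < 2) (by omega)]
    simp [Nat.mul_div_cancel_left _ (by norm_num : 0 < 2), Nat.mul_mod_right]

lemma s2_two_mul_add_one (q : ℕ) : s2 (2 * q + 1) = s2 q + 1 := by
  unfold s2
  rw [Nat.digits_def' (by norm_num : 1 < 2) (by omega)]
  have h1 : (2 * q + 1) % 2 = 1 := by omega
  have h2 : (2 * q + 1) / 2 = q := by omega
  rw [h1, h2]
  simp [Nat.add_comm]

lemma s2_pow_add : ∀ k q, q < 2 ^ k → s2 (2 ^ k + q) = s2 q + 1 := by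
  intro k
  induction k with
  | zero => intro q hq; interval_cases q; simp [s2]
  | succ k ih =>
    intro q hq
    rcases Nat.even_or_odd q with ⟨r, hr⟩ | ⟨r, hr⟩
    · have h : 2 ^ (k + 1) + q = 2 * (2 ^ k + r) := by rw [hr]; ring
      rw [h, s2_two_mul, ih r (by rw [hr] at hq; omega), hr]
      rw [show r + r = 2 * r by ring, s2_two_mul]
    · have h : 2 ^ (k + 1) + q = 2 * (2 ^ k + r) + 1 := by rw [hr]; ring
      rw [h, s2_two_mul_add_one, ih r (by rw [hr] at hq; omega), hr, s2_two_mul_add_one]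

/-- `S i k = ∑_{q < 2^k, q ≡ i (mod 3)} (-1)^(s2 q)`. -/
noncomputable def S (i k : ℕ) : ℤ :=
  ∑ q ∈ Finset.range (2 ^ k), if q % 3 = i then (-1 : ℤ) ^ (s2 q) else 0

lemma S_rec (i k : ℕ) (hi : i < 3) :
    S i (k + 1) = S i k - S ((i + 2 * (2 ^ k % 3)) % 3) k := by
  have hsplit : (2 : ℕ) ^ (k + 1) = 2 ^ k + 2 ^ k := by ring
  unfold S
  rw [hsplit, Finset.sum_range_add]
  have key : ∀ q ∈ Finset.range (2 ^ k),
      (if (2 ^ k + q) % 3 = i then (-1 : ℤ) ^ (s2 (2 ^ k + q)) else 0)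
      = -(if q % 3 = (i + 2 * (2 ^ k % 3)) % 3 then (-1 : ℤ) ^ (s2 q) else 0) := by
    intro q hq
    rw [Finset.mem_range] at hq
    rw [s2_pow_add k q hq]
    have hc : (2 ^ k + q) % 3 = i ↔ q % 3 = (i + 2 * (2 ^ k % 3)) % 3 := by omega
    rw [pow_succ]
    split_ifs with h1 h2 h2
    · ring
    · exact absurd (hc.mp h1) h2
    · exact absurd (hc.mpr h2) h1
    · ring
  rw [Finset.sum_congr rfl key, Finset.sum_neg_distrib]
  ring

lemma pow_two_mod_three_even (m : ℕ) : 2 ^ (2 * m) % 3 = 1 := by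
  rw [pow_mul, Nat.pow_mod]; norm_num

lemma pow_two_mod_three_odd (m : ℕ) : 2 ^ (2 * m + 1) % 3 = 2 := by
  rw [pow_succ, Nat.mul_mod, pow_two_mod_three_even]

lemma S_one : S 0 1 = 1 ∧ S 1 1 = -1 ∧ S 2 1 = 0 := by
  refine ⟨?_, ?_, ?_⟩ <;> simp [S, Finset.sum_range_succ, s2]

lemma S_odd (m : ℕ) :
    S 0 (2 * m + 1) = 3 ^ m ∧ S 1 (2 * m + 1) = -3 ^ m ∧ S 2 (2 * m + 1) = 0 := by
  induction m with
  | zero => simpa using S_one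
  | succ m ih =>
    obtain ⟨h0, h1, h2⟩ := ih
    have e0 : S 0 (2 * m + 2) = 2 * 3 ^ m := by
      have h := S_rec 0 (2 * m + 1) (by norm_num)
      rw [pow_two_mod_three_odd] at h
      norm_num at h
      rw [h, h0, h1]; ring
    have e1 : S 1 (2 * m + 2) = -3 ^ m := by
      have h := S_rec 1 (2 * m + 1) (by norm_num)
      rw [pow_two_mod_three_odd] at h
      norm_num at h
      rw [h, h1, h2]; ring
    have e2 : S 2 (2 * m + 2) = -3 ^ m := by
      have h := S_rec 2 (2 * m + 1) (by norm_num)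
      rw [pow_two_mod_three_odd] at h
      norm_num at h
      rw [h, h2, h0]; ring
    have hmod : (2 : ℕ) ^ (2 * m + 2) % 3 = 1 := by
      have h := pow_two_mod_three_even (m + 1)
      rwa [show 2 * (m + 1) = 2 * m + 2 by ring] at h
    refine ⟨?_, ?_, ?_⟩
    · have h := S_rec 0 (2 * m + 2) (by norm_num)
      rw [hmod] at h
      norm_num at h
      rw [show 2 * (m + 1) + 1 = 2 * m + 2 + 1 by ring, h, e0, e2]; ring
    · have h := S_rec 1 (2 * m + 2) (by norm_num)
      rw [hmod] at h
      norm_num at h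
      rw [show 2 * (m + 1) + 1 = 2 * m + 2 + 1 by ring, h, e1, e0]; ring
    · have h := S_rec 2 (2 * m + 2) (by norm_num)
      rw [hmod] at h
      norm_num at h
      rw [show 2 * (m + 1) + 1 = 2 * m + 2 + 1 by ring, h, e2, e1]; ring

lemma sum_odd_reindex (F : ℕ → ℤ) (N : ℕ) :
    ∑ m ∈ Finset.range (2 * N), (if Odd m then F m else 0) =
      ∑ q ∈ Finset.range N, F (2 * q + 1) := by
  induction N with
  | zero => simp
  | succ N ih =>
    rw [show 2 * (N + 1) = (2 * N + 1) + 1 by ring, Finset.sum_range_succ,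
      Finset.sum_range_succ, ih, Finset.sum_range_succ]
    have h1 : ¬ Odd (2 * N) := by simp [Nat.odd_iff]
    have h2 : Odd (2 * N + 1) := ⟨N, by ring⟩
    rw [if_neg h1, if_pos h2]
    ring

lemma delta_eq_sum (N : ℕ) :
    deltaOdd3 2 N = ∑ m ∈ Finset.range N,
      (if Odd m ∧ m % 3 = 2 then -(-1 : ℤ) ^ (s2 m) else 0) := by
  unfold deltaOdd3
  rw [← Finset.sum_boole (p := fun m => Odd m ∧ m % 3 = 2 ∧ Odious m),
      ← Finset.sum_boole (p := fun m => Odd m ∧ m % 3 = 2 ∧ Evil m),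
      ← Finset.sum_sub_distrib]
  refine Finset.sum_congr rfl fun m _ => ?_
  rcases Nat.even_or_odd (s2 m) with he | ho
  · have hno : ¬ Odious m := Nat.not_odd_iff_even.mpr he
    have hev : Evil m := he
    rw [he.neg_one_pow]
    by_cases h : Odd m ∧ m % 3 = 2
    · rw [if_neg (by tauto), if_pos ⟨h.1, h.2, hev⟩, if_pos h]; ring
    · rw [if_neg (by tauto), if_neg (by tauto), if_neg h]; ring
  · have hod : Odious m := ho
    have hne : ¬ Evil m := Nat.not_even_iff_odd.mpr ho
    rw [ho.neg_one_pow]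
    by_cases h : Odd m ∧ m % 3 = 2
    · rw [if_pos ⟨h.1, h.2, hod⟩, if_neg (by tauto), if_pos h]; ring
    · rw [if_neg (by tauto), if_neg (by tauto), if_neg h]; ring

lemma delta_eq_S (k : ℕ) : deltaOdd3 2 (2 ^ (k + 1)) = S 2 k := by
  rw [delta_eq_sum, show (2 : ℕ) ^ (k + 1) = 2 * 2 ^ k by ring]
  have hsplit : ∀ m, (if Odd m ∧ m % 3 = 2 then -(-1 : ℤ) ^ (s2 m) else 0) =
      if Odd m then (if m % 3 = 2 then -(-1 : ℤ) ^ (s2 m) else 0) else 0 := by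
    intro m; by_cases h1 : Odd m <;> by_cases h2 : m % 3 = 2 <;> simp [h1, h2]
  simp_rw [hsplit]
  rw [sum_odd_reindex]
  refine Finset.sum_congr rfl fun q _ => ?_
  have hmod : (2 * q + 1) % 3 = 2 ↔ q % 3 = 2 := by omega
  rw [s2_two_mul_add_one]
  by_cases h : q % 3 = 2
  · rw [if_pos (hmod.mpr h), if_pos h, pow_succ]; ring
  · rw [if_neg (fun hh => h (hmod.mp hh)), if_neg h]


/-- For every integer `n ≥ 1`, Δ^{odd}_{3,2}([0, 2^{2n})) = 0. -/
theorem deltaOdd3_two_pow_even (n : ℕ) (hn : 1 ≤ n) :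
    deltaOdd3 2 (2 ^ (2 * n)) = 0 := by
  obtain ⟨m, rfl⟩ : ∃ m, n = m + 1 := ⟨n - 1, by omega⟩
  rw [show 2 * (m + 1) = (2 * m + 1) + 1 by ring, delta_eq_S, (S_odd m).2.2]
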